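/- arXiv:2405.12855 — 3 statements merged into one kernel-verified Lean document; each statement's English description precedes it below -/
import Mathlib

section
/- Let n ≥ 1 and let x_κ = a + κΔx for κ = 0,…,2^n−1 with Δx = (b−a)/(2^n−1). Define, for bit-strings i of length n, β_i = 2^{-n/2} Σ_{κ=0}^{2^n−1} x_κ (−1)^{Σ_m κ_m i_m} (the Hadamard–Walsh transform of the amplitude vector (x_κ)). Then β_i = 0 for every i whose binary weight |i|_b = Σ_m i_m exceeds 1. -/
private lemma bits_sum (k n : ℕ) :
    (∑ m ∈ Finset.range n, if k.testBit m then 2 ^ m else 0) = k % 2 ^ n := by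
  induction n with
  | zero => simp [Nat.mod_one]
  | succ n ih =>
    rw [Finset.sum_range_succ, ih, pow_succ, Nat.mod_mul, Nat.testBit_eq_decide_div_mod_eq]
    rcases Nat.mod_two_eq_zero_or_one (k / 2 ^ n) with h | h <;> simp [h, Nat.mul_comm]

private lemma flip_sum {n i t : ℕ} (ht : t < n) (hit : i.testBit t = true)
    (F : ℕ → ℝ) (hF : ∀ κ, F (κ ^^^ 2 ^ t) = F κ) :
    ∑ κ ∈ Finset.range (2 ^ n),
      F κ * (-1 : ℝ) ^ (∑ m ∈ Finset.range n,
        (if κ.testBit m then 1 else 0) * (if i.testBit m then 1 else 0) : ℕ) = 0 := by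
  have hsign : ∀ κ : ℕ,
      ((-1 : ℝ) ^ (∑ m ∈ Finset.range n,
        (if (κ ^^^ 2 ^ t).testBit m then 1 else 0) * (if i.testBit m then 1 else 0) : ℕ))
      = -(-1 : ℝ) ^ (∑ m ∈ Finset.range n,
        (if κ.testBit m then 1 else 0) * (if i.testBit m then 1 else 0) : ℕ) := by
    intro κ
    have hmem : t ∈ Finset.range n := Finset.mem_range.mpr ht
    rw [← Finset.add_sum_erase _ _ hmem, ← Finset.add_sum_erase _ _ hmem]
    have hrest : ∑ m ∈ (Finset.range n).erase t,
        (if (κ ^^^ 2 ^ t).testBit m then 1 else 0) * (if i.testBit m then 1 else 0)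
        = ∑ m ∈ (Finset.range n).erase t,
        (if κ.testBit m then 1 else 0) * (if i.testBit m then 1 else 0) := by
      refine Finset.sum_congr rfl fun m hm => ?_
      have hmt : t ≠ m := (Finset.ne_of_mem_erase hm).symm
      rw [Nat.testBit_xor, Nat.testBit_two_pow_of_ne hmt]
      simp
    rw [hrest]
    have hbit : (κ ^^^ 2 ^ t).testBit t = !κ.testBit t := by
      rw [Nat.testBit_xor, Nat.testBit_two_pow_self]
      simp
    rw [hbit, hit]
    cases h : κ.testBit t <;> simp [h, pow_add, pow_succ] <;> ring
  refine Finset.sum_involution (fun κ _ => κ ^^^ 2 ^ t) ?_ ?_ ?_ ?_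
  · intro κ _
    rw [hF, hsign]; ring
  · intro κ _ _ h
    have h0 : (2 : ℕ) ^ t = 0 := by
      have := congrArg (κ ^^^ ·) h
      simpa [← Nat.xor_assoc, Nat.xor_self] using this
    exact absurd h0 (pow_ne_zero t two_ne_zero)
  · intro κ hκ
    exact Finset.mem_range.mpr (Nat.xor_lt_two_pow (Finset.mem_range.mp hκ)
      (Nat.pow_lt_pow_right one_lt_two ht))
  · intro κ _
    simp [Nat.xor_assoc, Nat.xor_self]

/-- The Hadamard–Walsh transform of the affine amplitude vector
`x_κ = a + κ·Δx` (with `Δx = (b-a)/(2^n-1)`) vanishes on every index of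
binary weight greater than `1`. -/
theorem walsh_hadamard_affine {n : ℕ} (hn : 1 ≤ n) (a b : ℝ) (hab : a < b)
    (Δx : ℝ) (hΔx : Δx = (b - a) / (2 ^ n - 1)) :
    ∀ i < 2 ^ n,
      1 < ((Finset.range n).filter fun m => i.testBit m = true).card →
      (2 : ℝ) ^ (-(n : ℝ) / 2) *
        ∑ κ ∈ Finset.range (2 ^ n),
          (a + κ * Δx) *
            (-1 : ℝ) ^ (∑ m ∈ Finset.range n,
              (if κ.testBit m then 1 else 0) * (if i.testBit m then 1 else 0) : ℕ) = 0 := by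
  intro i hi hcard
  obtain ⟨t1, ht1, t2, ht2, hne⟩ := Finset.one_lt_card.mp hcard
  simp only [Finset.mem_filter, Finset.mem_range] at ht1 ht2
  apply mul_eq_zero_of_right
  have key : ∀ m : ℕ, ∃ t, t < n ∧ i.testBit t = true ∧ t ≠ m := by
    intro m
    by_cases h : t1 = m
    · exact ⟨t2, ht2.1, ht2.2, fun e => hne (h.trans e.symm)⟩
    · exact ⟨t1, ht1.1, ht1.2, h⟩
  have hκcast : ∀ κ ∈ Finset.range (2 ^ n),
      (κ : ℝ) = ∑ m ∈ Finset.range n, (if κ.testBit m then (2 : ℝ) ^ m else 0) := by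
    intro κ hκ
    have h1 := bits_sum κ n
    rw [Nat.mod_eq_of_lt (Finset.mem_range.mp hκ)] at h1
    calc (κ : ℝ) = ((∑ m ∈ Finset.range n, if κ.testBit m then 2 ^ m else 0 : ℕ) : ℝ) := by
          rw [h1]
      _ = _ := by push_cast; rfl
  have hsplit : ∑ κ ∈ Finset.range (2 ^ n),
      (a + κ * Δx) *
        (-1 : ℝ) ^ (∑ m ∈ Finset.range n,
          (if κ.testBit m then 1 else 0) * (if i.testBit m then 1 else 0) : ℕ)
      = (∑ κ ∈ Finset.range (2 ^ n),
          a * (-1 : ℝ) ^ (∑ m ∈ Finset.range n,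
            (if κ.testBit m then 1 else 0) * (if i.testBit m then 1 else 0) : ℕ))
        + ∑ m ∈ Finset.range n, ∑ κ ∈ Finset.range (2 ^ n),
            ((if κ.testBit m then (2 : ℝ) ^ m else 0) * Δx) *
              (-1 : ℝ) ^ (∑ m ∈ Finset.range n,
                (if κ.testBit m then 1 else 0) * (if i.testBit m then 1 else 0) : ℕ) := by
    rw [Finset.sum_comm, ← Finset.sum_add_distrib]
    refine Finset.sum_congr rfl fun κ hκ => ?_
    rw [← Finset.sum_mul, ← Finset.sum_mul, ← hκcast κ hκ]
    ring
  rw [hsplit, flip_sum ht1.1 ht1.2 (fun _ => a) (fun _ => rfl), zero_add]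
  refine Finset.sum_eq_zero fun m _ => ?_
  obtain ⟨t, htn, hit, htm⟩ := key m
  exact flip_sum htn hit (fun κ => (if κ.testBit m then (2 : ℝ) ^ m else 0) * Δx)
    (fun κ => by simp [Nat.testBit_xor, Nat.testBit_two_pow_of_ne htm])
end

section
/- More generally, if ψ_κ = Σ_{q=0}^{χ} α_q x_κ^q with x_κ = a + κΔx an affine function of κ and α_q ∈ ℂ, then the Hadamard–Walsh transform β_i = 2^{-n/2} Σ_κ ψ_κ (−1)^{κ·i} vanishes for every bit-string i of binary weight |i|_b > χ. -/
/-- Sign factor of the Walsh–Hadamard transform. -/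
noncomputable def whSgn (n i κ : ℕ) : ℂ :=
  (-1 : ℂ) ^ (∑ m ∈ Finset.range n,
    (if κ.testBit m then 1 else 0) * (if i.testBit m then 1 else 0) : ℕ)

lemma whSgn_key : ∀ n q i : ℕ,
    q < ((Finset.range n).filter fun m => i.testBit m = true).card →
    ∑ κ ∈ Finset.range (2 ^ n), (κ : ℂ) ^ q * whSgn n i κ = 0 := by
  intro n
  induction n with
  | zero => intro q i h; simp at h
  | succ n ih =>
    intro q i h
    have hsplit : (2 : ℕ) ^ (n + 1) = 2 ^ n + 2 ^ n := by ring
    rw [hsplit, Finset.sum_range_add]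
    have hsgn1 : ∀ κ ∈ Finset.range (2 ^ n),
        whSgn (n + 1) i κ = whSgn n i κ := by
      intro κ hκ
      rw [Finset.mem_range] at hκ
      unfold whSgn
      rw [Finset.sum_range_succ, Nat.testBit_lt_two_pow hκ]
      simp
    have hsgn2 : ∀ κ ∈ Finset.range (2 ^ n),
        whSgn (n + 1) i (2 ^ n + κ) =
          whSgn n i κ * (-1 : ℂ) ^ (if i.testBit n then 1 else 0 : ℕ) := by
      intro κ hκ
      rw [Finset.mem_range] at hκ
      unfold whSgn
      rw [Finset.sum_range_succ, pow_add]
      congr 2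
      · apply Finset.sum_congr rfl
        intro m hm
        rw [Finset.mem_range] at hm
        rw [Nat.testBit_two_pow_add_gt hm]
      · rw [Nat.testBit_two_pow_add_eq, Nat.testBit_lt_two_pow hκ]
        simp only [Bool.not_false, if_true, one_mul]
    have hcard : (((Finset.range (n + 1)).filter fun m => i.testBit m = true).card) =
        (((Finset.range n).filter fun m => i.testBit m = true).card) +
          (if i.testBit n then 1 else 0) := by
      rw [Finset.range_add_one, Finset.filter_insert]
      by_cases hb : i.testBit n = true
      · rw [if_pos hb, if_pos hb, Finset.card_insert_of_notMem]
        intro hm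
        exact absurd (Finset.mem_range.mp (Finset.mem_filter.mp hm).1) (lt_irrefl n)
      · rw [if_neg hb, if_neg hb, add_zero]
    have h1 : ∑ κ ∈ Finset.range (2 ^ n), (κ : ℂ) ^ q * whSgn (n + 1) i κ =
        ∑ κ ∈ Finset.range (2 ^ n), (κ : ℂ) ^ q * whSgn n i κ :=
      Finset.sum_congr rfl fun κ hκ => by rw [hsgn1 κ hκ]
    have h2 : ∑ κ ∈ Finset.range (2 ^ n),
        ((2 ^ n + κ : ℕ) : ℂ) ^ q * whSgn (n + 1) i (2 ^ n + κ) =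
        ∑ k ∈ Finset.range (q + 1),
          (-1 : ℂ) ^ (if i.testBit n then 1 else 0 : ℕ) *
            ((2 ^ n : ℂ) ^ (q - k) * (q.choose k)) *
            ∑ κ ∈ Finset.range (2 ^ n), (κ : ℂ) ^ k * whSgn n i κ := by
      have step : ∀ κ ∈ Finset.range (2 ^ n),
          ((2 ^ n + κ : ℕ) : ℂ) ^ q * whSgn (n + 1) i (2 ^ n + κ) =
          ∑ k ∈ Finset.range (q + 1),
            (-1 : ℂ) ^ (if i.testBit n then 1 else 0 : ℕ) *
              ((2 ^ n : ℂ) ^ (q - k) * (q.choose k)) *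
              ((κ : ℂ) ^ k * whSgn n i κ) := by
        intro κ hκ
        rw [hsgn2 κ hκ]
        push_cast
        rw [show ((2:ℂ) ^ n + (κ:ℂ)) = (κ:ℂ) + 2 ^ n by ring, add_pow, Finset.sum_mul]
        apply Finset.sum_congr rfl
        intro k hk
        ring
      rw [Finset.sum_congr rfl step, Finset.sum_comm]
      exact Finset.sum_congr rfl fun k hk => (Finset.mul_sum _ _ _).symm
    rw [h1, h2]
    by_cases hb : i.testBit n = true
    · rw [hb] at hcard
      simp only [if_true] at hcard
      have hq : q ≤ ((Finset.range n).filter fun m => i.testBit m = true).card := by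
        omega
      rw [Finset.sum_range_succ]
      have hsmall : ∀ k ∈ Finset.range q,
          (-1 : ℂ) ^ (if i.testBit n then 1 else 0 : ℕ) *
            ((2 ^ n : ℂ) ^ (q - k) * (q.choose k)) *
            ∑ κ ∈ Finset.range (2 ^ n), (κ : ℂ) ^ k * whSgn n i κ = 0 := by
        intro k hk
        rw [Finset.mem_range] at hk
        rw [ih k i (by omega), mul_zero]
      rw [Finset.sum_eq_zero hsmall, zero_add, hb]
      simp only [if_true, pow_one, Nat.sub_self, pow_zero, one_mul, Nat.choose_self,
        Nat.cast_one, mul_one]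
      ring
    · rw [if_neg hb] at hcard
      simp only [add_zero] at hcard
      have hz : ∀ k ≤ q, ∑ κ ∈ Finset.range (2 ^ n), (κ : ℂ) ^ k * whSgn n i κ = 0 :=
        fun k hk => ih k i (by omega)
      rw [hz q le_rfl, zero_add]
      apply Finset.sum_eq_zero
      intro k hk
      rw [Finset.mem_range] at hk
      rw [hz k (by omega), mul_zero]

/-- If `ψ_κ = Σ_{q=0}^{χ} α_q x_κ^q` with `x_κ = a + κ·Δx` affine in `κ`, then
the Hadamard–Walsh transform of `ψ` vanishes on every index of binary weight
greater than `χ`. -/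
theorem walsh_hadamard_polynomial {n : ℕ} (χ : ℕ) (a Δx : ℝ) (α : ℕ → ℂ)
    (ψ : ℕ → ℂ)
    (hψ : ∀ κ, ψ κ = ∑ q ∈ Finset.range (χ + 1), α q * ((a + κ * Δx : ℝ) : ℂ) ^ q) :
    ∀ i < 2 ^ n,
      χ < ((Finset.range n).filter fun m => i.testBit m = true).card →
      (((2 : ℝ) ^ (-(n : ℝ) / 2) : ℝ) : ℂ) *
        ∑ κ ∈ Finset.range (2 ^ n),
          ψ κ * (-1 : ℂ) ^ (∑ m ∈ Finset.range n,
            (if κ.testBit m then 1 else 0) * (if i.testBit m then 1 else 0) : ℕ) = 0 := by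
  intro i _ hχ
  have hmain : ∑ κ ∈ Finset.range (2 ^ n), ψ κ * whSgn n i κ = 0 := by
    have hexp : ∀ κ ∈ Finset.range (2 ^ n), ψ κ * whSgn n i κ =
        ∑ q ∈ Finset.range (χ + 1), ∑ k ∈ Finset.range (q + 1),
          α q * ((Δx : ℂ) ^ k * (a : ℂ) ^ (q - k) * (q.choose k)) *
            ((κ : ℂ) ^ k * whSgn n i κ) := by
      intro κ hκ
      rw [hψ κ, Finset.sum_mul]
      apply Finset.sum_congr rfl
      intro q hq
      push_cast
      rw [show ((a : ℂ) + (κ : ℂ) * Δx) = (κ : ℂ) * Δx + a by ring, add_pow,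
        Finset.mul_sum, Finset.sum_mul]
      apply Finset.sum_congr rfl
      intro k hk
      ring
    rw [Finset.sum_congr rfl hexp, Finset.sum_comm]
    apply Finset.sum_eq_zero
    intro q hq
    rw [Finset.sum_comm]
    apply Finset.sum_eq_zero
    intro k hk
    rw [Finset.mem_range] at hq hk
    rw [← Finset.mul_sum, whSgn_key n k i (by omega), mul_zero]
  rw [show ∑ κ ∈ Finset.range (2 ^ n),
          ψ κ * (-1 : ℂ) ^ (∑ m ∈ Finset.range n,
            (if κ.testBit m then 1 else 0) * (if i.testBit m then 1 else 0) : ℕ) =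
        ∑ κ ∈ Finset.range (2 ^ n), ψ κ * whSgn n i κ from rfl, hmain, mul_zero]
end

section
/- Given an (α, a, δ)-block-encoding U of A and a (β, b, ε)-block-encoding V of B (both n-qubit operators), the unitary (I_b ⊗ U)(V ⊗ I_a) (with appropriately arranged ancillas) is an (αβ, a+b, αε + βδ + δε)-block-encoding of AB; in particular with exact encodings (δ=ε=0) it is an (αβ, a+b, 0)-block-encoding of AB. -/
open Matrix

set_option maxHeartbeats 1000000
set_option synthInstance.maxHeartbeats 400000

lemma unitary_row_orth {m : Type*} [Fintype m] [DecidableEq m]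
    (U : Matrix m m ℂ) (hU : U ∈ Matrix.unitaryGroup m ℂ) (i j : m) :
    ∑ c, U i c * star (U j c) = if i = j then 1 else 0 := by
  have h := (Matrix.mem_unitaryGroup_iff).mp hU
  have h2 := Matrix.ext_iff.2 h i j
  simpa [Matrix.mul_apply, Matrix.star_apply, Matrix.one_apply] using h2

lemma kron_left_unitary {m k : Type*} [Fintype m] [DecidableEq m] [Fintype k] [DecidableEq k]
    (U : Matrix k k ℂ) (hU : U ∈ Matrix.unitaryGroup k ℂ) :
    (Matrix.of fun r c : m × k => if r.1 = c.1 then U r.2 c.2 else 0)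
      ∈ Matrix.unitaryGroup (m × k) ℂ := by
  rw [Matrix.mem_unitaryGroup_iff]
  ext r s
  simp only [Matrix.mul_apply, Matrix.of_apply, Matrix.star_apply, apply_ite (star : ℂ → ℂ),
    star_zero, ite_mul, mul_ite, zero_mul, mul_zero, Fintype.sum_prod_type,
    Finset.sum_ite_irrel, Finset.sum_const_zero, Finset.sum_ite_eq, Finset.sum_ite_eq',
    Finset.mem_univ, if_true]
  rw [unitary_row_orth U hU r.2 s.2, Matrix.one_apply]
  by_cases h1 : s.1 = r.1 <;> by_cases h2 : r.2 = s.2 <;>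
    simp_all [Prod.ext_iff, eq_comm]

lemma mid_unitary {m k l : Type*} [Fintype m] [DecidableEq m] [Fintype k] [DecidableEq k]
    [Fintype l] [DecidableEq l]
    (V : Matrix (m × l) (m × l) ℂ) (hV : V ∈ Matrix.unitaryGroup (m × l) ℂ) :
    (Matrix.of fun r c : m × k × l =>
        if r.2.1 = c.2.1 then V (r.1, r.2.2) (c.1, c.2.2) else 0)
      ∈ Matrix.unitaryGroup (m × k × l) ℂ := by
  rw [Matrix.mem_unitaryGroup_iff]
  ext r s
  simp only [Matrix.mul_apply, Matrix.of_apply, Matrix.star_apply, apply_ite (star : ℂ → ℂ),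
    star_zero, ite_mul, mul_ite, zero_mul, mul_zero, Fintype.sum_prod_type,
    Finset.sum_ite_irrel, Finset.sum_const_zero, Finset.sum_ite_eq, Finset.sum_ite_eq',
    Finset.mem_univ, if_true]
  by_cases h1 : s.2.1 = r.2.1
  · simp only [h1, if_true]
    rw [show (∑ x : m, ∑ y : l, V (r.1, r.2.2) (x, y) * star (V (s.1, s.2.2) (x, y)))
        = ∑ c : m × l, V (r.1, r.2.2) c * star (V (s.1, s.2.2) c) from
      (Fintype.sum_prod_type (fun c : m × l => V (r.1, r.2.2) c * star (V (s.1, s.2.2) c))).symm]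
    rw [unitary_row_orth V hV (r.1, r.2.2) (s.1, s.2.2), Matrix.one_apply]
    by_cases h2 : (r.1, r.2.2) = (s.1, s.2.2) <;> simp_all [Prod.ext_iff]
  · rw [Matrix.one_apply, if_neg (fun h : r = s => h1 (by rw [h])),
      if_neg (fun h : r.2.1 = s.2.1 => h1 h.symm)]

lemma clm_apply_coord {q : Type*} [Fintype q] [DecidableEq q]
    (M : Matrix q q ℂ) (x : EuclideanSpace ℂ q) (p : q) :
    (Matrix.toEuclideanCLM (𝕜 := ℂ) M x) p = ∑ c, M p c * x c := by
  have h := LinearMap.congr_fun (Matrix.coe_toEuclideanCLM_eq_toEuclideanLin (A := M)) x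
  have : Matrix.toEuclideanCLM (𝕜 := ℂ) M x = Matrix.toEuclideanLin M x := h
  rw [this, Matrix.toEuclideanLin_apply]
  simp [Matrix.mulVec, dotProduct]

lemma corner_norm_le {m k : Type*} [Fintype m] [DecidableEq m] [Fintype k] [DecidableEq k]
    (U : Matrix (m × k) (m × k) ℂ) (hU : U ∈ Matrix.unitaryGroup (m × k) ℂ) (z : m) :
    ‖Matrix.toEuclideanCLM (𝕜 := ℂ) (Matrix.of fun i j : k => U (z, i) (z, j))‖ ≤ 1 := by
  refine ContinuousLinearMap.opNorm_le_bound _ zero_le_one fun x => ?_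
  rw [one_mul]
  set y : EuclideanSpace ℂ (m × k) :=
    (WithLp.equiv 2 _).symm (fun p : m × k => if p.1 = z then x p.2 else 0) with hy
  have hyc : ∀ p : m × k, y p = if p.1 = z then x p.2 else 0 := fun p => rfl
  have hUmem : Matrix.toEuclideanCLM (𝕜 := ℂ) U ∈
      unitary (EuclideanSpace ℂ (m × k) →L[ℂ] EuclideanSpace ℂ (m × k)) := by
    have h1 := hU.1
    have h2 := hU.2
    constructor
    · rw [← map_star, ← _root_.map_mul, h1, _root_.map_one]
    · rw [← map_star, ← _root_.map_mul, h2, _root_.map_one]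
  have hynorm : ‖y‖ = ‖x‖ := by
    rw [EuclideanSpace.norm_eq, EuclideanSpace.norm_eq]
    congr 1
    rw [Fintype.sum_prod_type]
    simp only [hyc, apply_ite (fun t : ℂ => ‖t‖ ^ 2), norm_zero, ne_eq, OfNat.ofNat_ne_zero,
      not_false_eq_true, zero_pow, Finset.sum_ite_irrel, Finset.sum_const_zero,
      Finset.sum_ite_eq, Finset.sum_ite_eq', Finset.mem_univ, if_true]
  have hkey : ∀ i : k,
      (Matrix.toEuclideanCLM (𝕜 := ℂ) (Matrix.of fun i j : k => U (z, i) (z, j)) x) i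
        = (Matrix.toEuclideanCLM (𝕜 := ℂ) U y) (z, i) := by
    intro i
    rw [clm_apply_coord, clm_apply_coord, Fintype.sum_prod_type]
    simp only [hyc, Matrix.of_apply, mul_ite, mul_zero, Finset.sum_ite_irrel,
      Finset.sum_const_zero, Finset.sum_ite_eq, Finset.sum_ite_eq', Finset.mem_univ, if_true]
  calc ‖Matrix.toEuclideanCLM (𝕜 := ℂ) (Matrix.of fun i j : k => U (z, i) (z, j)) x‖
      ≤ ‖Matrix.toEuclideanCLM (𝕜 := ℂ) U y‖ := by
        rw [EuclideanSpace.norm_eq, EuclideanSpace.norm_eq]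
        apply Real.sqrt_le_sqrt
        simp only [hkey]
        have hsub : (Finset.univ.image fun i : k => ((z, i) : m × k)) ⊆ Finset.univ :=
          Finset.subset_univ _
        have himg := Finset.sum_image (f := fun p : m × k =>
            ‖(Matrix.toEuclideanCLM (𝕜 := ℂ) U y) p‖ ^ 2) (g := fun i : k => ((z, i) : m × k))
          (s := Finset.univ) (fun a _ b _ h => by simpa [Prod.ext_iff] using h)
        rw [← himg]
        exact Finset.sum_le_sum_of_subset_of_nonneg hsub fun p _ _ => by positivity
    _ = ‖y‖ := ContinuousLinearMap.norm_map_of_mem_unitary hUmem y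
    _ = ‖x‖ := hynorm

/-- Product of block-encodings: if `U` is an `(α,a,δ)`-block-encoding of `A`
and `V` a `(β,b,ε)`-block-encoding of `B`, then `(I_b ⊗ U)(V ⊗ I_a)` is an
`(αβ, a+b, αε+βδ+δε)`-block-encoding of `AB`; with exact encodings it is an
`(αβ, a+b, 0)`-block-encoding of `AB`. -/
theorem block_encoding_product {ab bb n : ℕ} (α β δ ε : ℝ) (hα : 0 < α) (hβ : 0 < β)
    (hδ : 0 ≤ δ) (hε : 0 ≤ ε)
    (U : Matrix (Fin (2 ^ ab) × Fin (2 ^ n)) (Fin (2 ^ ab) × Fin (2 ^ n)) ℂ)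
    (V : Matrix (Fin (2 ^ bb) × Fin (2 ^ n)) (Fin (2 ^ bb) × Fin (2 ^ n)) ℂ)
    (hU : U ∈ Matrix.unitaryGroup (Fin (2 ^ ab) × Fin (2 ^ n)) ℂ)
    (hV : V ∈ Matrix.unitaryGroup (Fin (2 ^ bb) × Fin (2 ^ n)) ℂ)
    (A B : Matrix (Fin (2 ^ n)) (Fin (2 ^ n)) ℂ)
    (hA : ‖Matrix.toEuclideanCLM (𝕜 := ℂ)
        (A - (α : ℂ) • Matrix.of fun i j : Fin (2 ^ n) =>
          U (⟨0, by positivity⟩, i) (⟨0, by positivity⟩, j))‖ ≤ δ)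
    (hB : ‖Matrix.toEuclideanCLM (𝕜 := ℂ)
        (B - (β : ℂ) • Matrix.of fun i j : Fin (2 ^ n) =>
          V (⟨0, by positivity⟩, i) (⟨0, by positivity⟩, j))‖ ≤ ε)
    -- the composite `(I_b ⊗ U)(V ⊗ I_a)` on ancillas side by side
    (W : Matrix (Fin (2 ^ bb) × Fin (2 ^ ab) × Fin (2 ^ n))
        (Fin (2 ^ bb) × Fin (2 ^ ab) × Fin (2 ^ n)) ℂ)
    (hW : W =
      (Matrix.of fun r c : Fin (2 ^ bb) × Fin (2 ^ ab) × Fin (2 ^ n) =>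
        if r.1 = c.1 then U (r.2.1, r.2.2) (c.2.1, c.2.2) else 0) *
      (Matrix.of fun r c : Fin (2 ^ bb) × Fin (2 ^ ab) × Fin (2 ^ n) =>
        if r.2.1 = c.2.1 then V (r.1, r.2.2) (c.1, c.2.2) else 0)) :
    W ∈ Matrix.unitaryGroup (Fin (2 ^ bb) × Fin (2 ^ ab) × Fin (2 ^ n)) ℂ ∧
    ‖Matrix.toEuclideanCLM (𝕜 := ℂ)
        (A * B - ((α * β : ℝ) : ℂ) • Matrix.of fun i j : Fin (2 ^ n) =>
          W ((⟨0, by positivity⟩, ⟨0, by positivity⟩, i))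
            ((⟨0, by positivity⟩, ⟨0, by positivity⟩, j)))‖
      ≤ α * ε + β * δ + δ * ε ∧
    (δ = 0 → ε = 0 →
      ‖Matrix.toEuclideanCLM (𝕜 := ℂ)
        (A * B - ((α * β : ℝ) : ℂ) • Matrix.of fun i j : Fin (2 ^ n) =>
          W ((⟨0, by positivity⟩, ⟨0, by positivity⟩, i))
            ((⟨0, by positivity⟩, ⟨0, by positivity⟩, j)))‖ ≤ 0) := by
  classical
  -- corner matrices
  set Uc : Matrix (Fin (2 ^ n)) (Fin (2 ^ n)) ℂ :=
    Matrix.of fun i j : Fin (2 ^ n) =>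
      U (⟨0, by positivity⟩, i) (⟨0, by positivity⟩, j) with hUcdef
  set Vc : Matrix (Fin (2 ^ n)) (Fin (2 ^ n)) ℂ :=
    Matrix.of fun i j : Fin (2 ^ n) =>
      V (⟨0, by positivity⟩, i) (⟨0, by positivity⟩, j) with hVcdef
  have hUcn : ‖Matrix.toEuclideanCLM (𝕜 := ℂ) Uc‖ ≤ 1 := corner_norm_le U hU _
  have hVcn : ‖Matrix.toEuclideanCLM (𝕜 := ℂ) Vc‖ ≤ 1 := corner_norm_le V hV _
  have hA' : ‖Matrix.toEuclideanCLM (𝕜 := ℂ) (A - (α : ℂ) • Uc)‖ ≤ δ := hA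
  have hB' : ‖Matrix.toEuclideanCLM (𝕜 := ℂ) (B - (β : ℂ) • Vc)‖ ≤ ε := hB
  -- the corner of W is the product of the corners
  have hWc : (Matrix.of fun i j : Fin (2 ^ n) =>
      W ((⟨0, by positivity⟩, ⟨0, by positivity⟩, i))
        ((⟨0, by positivity⟩, ⟨0, by positivity⟩, j))) = Uc * Vc := by
    ext i j
    rw [Matrix.of_apply, hW, Matrix.mul_apply, Matrix.mul_apply]
    simp only [Matrix.of_apply, hUcdef, hVcdef, ite_mul, zero_mul, mul_ite, mul_zero,
      Fintype.sum_prod_type, Finset.sum_ite_irrel, Finset.sum_const_zero,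
      Finset.sum_ite_eq, Finset.sum_ite_eq', Finset.mem_univ, if_true]
  -- scalar identity
  have hscal : ((α * β : ℝ) : ℂ) • (Uc * Vc) = ((α : ℂ) • Uc) * ((β : ℂ) • Vc) := by
    rw [smul_mul_assoc, mul_smul_comm, smul_smul, Complex.ofReal_mul]
  have hsplit : A * B - ((α * β : ℝ) : ℂ) • (Uc * Vc)
      = (A - (α : ℂ) • Uc) * B + ((α : ℂ) • Uc) * (B - (β : ℂ) • Vc) := by
    rw [hscal]; noncomm_ring
  have hαUc : ‖Matrix.toEuclideanCLM (𝕜 := ℂ) ((α : ℂ) • Uc)‖ ≤ α := by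
    rw [_root_.map_smul,
      norm_smul (α : ℂ) (Matrix.toEuclideanCLM (𝕜 := ℂ) Uc)]
    calc ‖(α : ℂ)‖ * ‖Matrix.toEuclideanCLM (𝕜 := ℂ) Uc‖ ≤ ‖(α : ℂ)‖ * 1 :=
          mul_le_mul_of_nonneg_left hUcn (norm_nonneg _)
      _ = α := by
          rw [mul_one, Complex.norm_real, Real.norm_eq_abs, abs_of_pos hα]
  have hBn : ‖Matrix.toEuclideanCLM (𝕜 := ℂ) B‖ ≤ ε + β := by
    have hb : B = (B - (β : ℂ) • Vc) + (β : ℂ) • Vc := by abel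
    have hβVc : ‖Matrix.toEuclideanCLM (𝕜 := ℂ) ((β : ℂ) • Vc)‖ ≤ β := by
      rw [_root_.map_smul,
        norm_smul (β : ℂ) (Matrix.toEuclideanCLM (𝕜 := ℂ) Vc)]
      calc ‖(β : ℂ)‖ * ‖Matrix.toEuclideanCLM (𝕜 := ℂ) Vc‖ ≤ ‖(β : ℂ)‖ * 1 :=
            mul_le_mul_of_nonneg_left hVcn (norm_nonneg _)
        _ = β := by
            rw [mul_one, Complex.norm_real, Real.norm_eq_abs, abs_of_pos hβ]
    calc ‖Matrix.toEuclideanCLM (𝕜 := ℂ) B‖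
        = ‖Matrix.toEuclideanCLM (𝕜 := ℂ) (B - (β : ℂ) • Vc)
            + Matrix.toEuclideanCLM (𝕜 := ℂ) ((β : ℂ) • Vc)‖ := by
          rw [← _root_.map_add]
          exact congrArg _ (congrArg _ hb)
      _ ≤ ‖Matrix.toEuclideanCLM (𝕜 := ℂ) (B - (β : ℂ) • Vc)‖
            + ‖Matrix.toEuclideanCLM (𝕜 := ℂ) ((β : ℂ) • Vc)‖ := norm_add_le _ _
      _ ≤ ε + β := add_le_add hB' hβVc
  have hmain : ‖Matrix.toEuclideanCLM (𝕜 := ℂ)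
      (A * B - ((α * β : ℝ) : ℂ) • (Uc * Vc))‖ ≤ α * ε + β * δ + δ * ε := by
    rw [hsplit, _root_.map_add, _root_.map_mul, _root_.map_mul]
    have t1 : ‖Matrix.toEuclideanCLM (𝕜 := ℂ) (A - (α : ℂ) • Uc)
        * Matrix.toEuclideanCLM (𝕜 := ℂ) B‖ ≤ δ * (ε + β) :=
      le_trans (norm_mul_le _ _)
        (mul_le_mul hA' hBn (norm_nonneg _) hδ)
    have t2 : ‖Matrix.toEuclideanCLM (𝕜 := ℂ) ((α : ℂ) • Uc)
        * Matrix.toEuclideanCLM (𝕜 := ℂ) (B - (β : ℂ) • Vc)‖ ≤ α * ε :=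
      le_trans (norm_mul_le _ _)
        (mul_le_mul hαUc hB' (norm_nonneg _) (le_of_lt hα))
    calc ‖_ + _‖ ≤ _ := norm_add_le _ _
      _ ≤ δ * (ε + β) + α * ε := add_le_add t1 t2
      _ = α * ε + β * δ + δ * ε := by ring
  have h2 : ‖Matrix.toEuclideanCLM (𝕜 := ℂ)
      (A * B - ((α * β : ℝ) : ℂ) • Matrix.of fun i j : Fin (2 ^ n) =>
        W ((⟨0, by positivity⟩, ⟨0, by positivity⟩, i))
          ((⟨0, by positivity⟩, ⟨0, by positivity⟩, j)))‖ ≤ α * ε + β * δ + δ * ε := by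
    rw [hWc]; exact hmain
  refine ⟨?_, h2, fun h0 h1 => ?_⟩
  · rw [hW]
    exact mul_mem (kron_left_unitary U hU) (mid_unitary V hV)
  · refine le_trans h2 (le_of_eq ?_)
    rw [h0, h1]; ring
end
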